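/- Let G be a finite graph, S ∈ Δ(G), and C a connected component of G−S with N(C) = S' a proper subset of S. Then mfi_F(R(S,C)) = mfi_F(R(S',C)) for any fill weight F on G. -/

import Mathlib

open scoped NNReal

namespace PMCPP

variable {V : Type} {X : Type}

/-- A graph is chordal if every cycle on four or more vertices has a chord:
for every injective cyclic sequence of `n ≥ 4` vertices with consecutive
vertices adjacent, some pair of non-consecutive vertices of the cycle is adjacent. -/
def IsChordal (G : SimpleGraph V) : Prop :=
  ∀ n : ℕ, 4 ≤ n → ∀ f : ZMod n → V, Function.Injective f →
    (∀ i, G.Adj (f i) (f (i + 1))) →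
    ∃ i j : ZMod n, j ≠ i + 1 ∧ i ≠ j + 1 ∧ G.Adj (f i) (f j)

/-- `H` is a triangulation of `G`: a chordal supergraph on the same vertex set. -/
def IsTriangulation (G H : SimpleGraph V) : Prop := IsChordal H ∧ G ≤ H

/-- The fill edges of a triangulation `H` of `G`. -/
def fillEdges (G H : SimpleGraph V) : Set (Sym2 V) := H.edgeSet \ G.edgeSet

/-- `H` is a minimal triangulation of `G`: no graph obtained from `G` by adding a
proper subset of the fill edges of `H` is a triangulation of `G`. -/
def IsMinimalTriangulation (G H : SimpleGraph V) : Prop :=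
  IsTriangulation G H ∧ ∀ H' : SimpleGraph V, IsTriangulation G H' → H' ≤ H → H' = H

/-- `pf G U`: the potential fill edges of `U`, i.e. pairs of distinct vertices
of `U` that are not edges of `G`. -/
def pf (G : SimpleGraph V) (U : Set V) : Set (Sym2 V) :=
  {e : Sym2 V | ¬e.IsDiag ∧ e ∉ G.edgeSet ∧ ∀ v ∈ e, v ∈ U}

/-- `F(H)`: total weight of the fill edges of the triangulation `H` of `G`
under the fill weight `F`. -/
noncomputable def fillSum (G H : SimpleGraph V) (F : Sym2 V → ℝ≥0) : ℝ≥0 :=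
  ∑ᶠ e ∈ fillEdges G H, F e

/-- `fill_F(U)`: sum of `F` over the potential fill edges of `U`. -/
noncomputable def fillF (G : SimpleGraph V) (F : Sym2 V → ℝ≥0) (U : Set V) : ℝ≥0 :=
  ∑ᶠ e ∈ pf G U, F e

/-- `mfi_F(G)`: the minimum weight of a triangulation of `G`. -/
noncomputable def mfi (G : SimpleGraph V) (F : Sym2 V → ℝ≥0) : ℝ≥0 :=
  sInf {x : ℝ≥0 | ∃ H : SimpleGraph V, IsTriangulation G H ∧ x = fillSum G H F}

/-- `H` is an `F`-minimum triangulation of `G`. -/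
def IsFMinTriangulation (G H : SimpleGraph V) (F : Sym2 V → ℝ≥0) : Prop :=
  IsTriangulation G H ∧ ∀ H' : SimpleGraph V, IsTriangulation G H' →
    fillSum G H F ≤ fillSum G H' F

/-- `H` is an `F`-minimum minimal triangulation of `G`. -/
def IsFMinMinimalTriangulation (G H : SimpleGraph V) (F : Sym2 V → ℝ≥0) : Prop :=
  IsFMinTriangulation G H F ∧ IsMinimalTriangulation G H

/-- There is a walk from `x` to `y` in `G` avoiding `S`. -/
def AvoidReach (G : SimpleGraph V) (S : Set V) (x y : V) : Prop :=
  ∃ p : G.Walk x y, ∀ v ∈ p.support, v ∉ S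

/-- `S` is an `xy`-separator of `G`. -/
def IsSeparator (G : SimpleGraph V) (S : Set V) (x y : V) : Prop :=
  x ∉ S ∧ y ∉ S ∧ G.Reachable x y ∧ ¬AvoidReach G S x y

/-- `S` is a minimal separator of `G`: a minimal `xy`-separator for some `x`, `y`. -/
def IsMinSeparator (G : SimpleGraph V) (S : Set V) : Prop :=
  ∃ x y : V, IsSeparator G S x y ∧ ∀ S' ⊂ S, ¬IsSeparator G S' x y

/-- `Δ(G)`: the set of minimal separators of `G`. -/
def minSeps (G : SimpleGraph V) : Set (Set V) := {S | IsMinSeparator G S}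

/-- `C` is a connected component of `G − S`: a maximal `S`-avoiding-connected
set of vertices disjoint from `S`. -/
def IsCompOf (G : SimpleGraph V) (S C : Set V) : Prop :=
  C.Nonempty ∧ Disjoint C S ∧ (∀ x ∈ C, ∀ y ∈ C, AvoidReach G S x y) ∧
    ∀ C' : Set V, C ⊆ C' → Disjoint C' S →
      (∀ x ∈ C', ∀ y ∈ C', AvoidReach G S x y) → C' = C

/-- `S'` is parallel to `S`: `S'` meets at most one connected component of `G − S`. -/
def Parallel (G : SimpleGraph V) (S S' : Set V) : Prop :=
  {C : Set V | IsCompOf G S C ∧ (C ∩ S').Nonempty}.Subsingleton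

/-- `Φ` is a maximal pairwise-parallel set of minimal separators of `G`. -/
def MaxPairwiseParallel (G : SimpleGraph V) (Φ : Set (Set V)) : Prop :=
  Φ ⊆ minSeps G ∧ Φ.Pairwise (Parallel G) ∧
    ∀ Ψ : Set (Set V), Ψ ⊆ minSeps G → Ψ.Pairwise (Parallel G) → Φ ⊆ Ψ → Ψ = Φ

/-- `G_Φ`: the graph obtained from `G` by saturating every separator in `Φ`. -/
def saturate (G : SimpleGraph V) (Φ : Set (Set V)) : SimpleGraph V where
  Adj u v := u ≠ v ∧ (G.Adj u v ∨ ∃ S ∈ Φ, u ∈ S ∧ v ∈ S)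
  symm := by
    refine ⟨?_⟩
    rintro u v ⟨h0, h⟩
    refine ⟨h0.symm, ?_⟩
    rcases h with h | ⟨S, hS, hu, hv⟩
    · exact Or.inl h.symm
    · exact Or.inr ⟨S, hS, hv, hu⟩
  loopless := ⟨fun u h => h.1 rfl⟩

/-- `N(C)`: the vertices outside `C` having a neighbor in `C`. -/
def neighborsOf (G : SimpleGraph V) (C : Set V) : Set V :=
  {v | v ∉ C ∧ ∃ u ∈ C, G.Adj u v}

/-- `(S, C)` is a block of `G`. -/
def IsBlock (G : SimpleGraph V) (S C : Set V) : Prop :=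
  S ∈ minSeps G ∧ IsCompOf G S C

/-- `(S, C)` is a full block of `G`: `N(C) = S`. -/
def IsFullBlock (G : SimpleGraph V) (S C : Set V) : Prop :=
  IsBlock G S C ∧ neighborsOf G C = S

/-- The realization `R(S,C)`: the graph on the vertices `S ∪ C` (realized here as
a graph on `V` all of whose edges lie inside `S ∪ C`) whose edges are the edges of
`G` inside `S ∪ C` together with all pairs of distinct vertices of `S`. -/
def realization (G : SimpleGraph V) (S C : Set V) : SimpleGraph V where
  Adj u v := u ≠ v ∧ u ∈ S ∪ C ∧ v ∈ S ∪ C ∧ (G.Adj u v ∨ (u ∈ S ∧ v ∈ S))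
  symm := by
    refine ⟨?_⟩
    rintro u v ⟨h0, h1, h2, h3⟩
    refine ⟨h0.symm, h2, h1, ?_⟩
    rcases h3 with h | ⟨ha, hb⟩
    · exact Or.inl h.symm
    · exact Or.inr ⟨hb, ha⟩
  loopless := ⟨fun u h => h.1 rfl⟩

/-- `K` is a maximal clique of `H`. -/
def IsMaximalClique (H : SimpleGraph V) (K : Set V) : Prop :=
  H.IsClique K ∧ ∀ K' : Set V, H.IsClique K' → K ⊆ K' → K' = K

/-- `K` is a potential maximal clique of `G`: a maximal clique of some
minimal triangulation of `G`. -/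
def IsPMC (G : SimpleGraph V) (K : Set V) : Prop :=
  ∃ H : SimpleGraph V, IsMinimalTriangulation G H ∧ IsMaximalClique H K

/-- The graph obtained from `G` by adding the set of edges `E'`. -/
def addEdges (G : SimpleGraph V) (E' : Set (Sym2 V)) : SimpleGraph V :=
  G ⊔ SimpleGraph.fromEdgeSet E'

/-- A character on `X`: a partition of a subset of `X`, i.e. a collection of
nonempty pairwise disjoint subsets (cells) of `X`. -/
def IsCharacter (χ : Set (Set X)) : Prop :=
  (∀ A ∈ χ, A.Nonempty) ∧ χ.PairwiseDisjoint id

/-- Vertices of the partition intersection graph of `C`: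
pairs `(A, χ)` with `χ ∈ C` and `A` a cell of `χ`. -/
def PigV (C : Set (Set (Set X))) : Type _ :=
  {p : Set X × Set (Set X) // p.2 ∈ C ∧ p.1 ∈ p.2}

/-- The partition intersection graph `pig C`: `(A, χ)` and `(A', χ')` are adjacent
iff they are distinct and `A ∩ A' ≠ ∅`. -/
def pig (C : Set (Set (Set X))) : SimpleGraph (PigV C) where
  Adj p q := p ≠ q ∧ (p.val.1 ∩ q.val.1).Nonempty
  symm := by
    refine ⟨?_⟩
    rintro p q ⟨h0, h⟩
    exact ⟨h0.symm, by rwa [Set.inter_comm]⟩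
  loopless := ⟨fun p h => h.1 rfl⟩

/-- A triangulation `H` of `pig C` is proper if no fill edge joins a
monochromatic pair (two vertices with the same character). -/
def IsProper (C : Set (Set (Set X))) (H : SimpleGraph (PigV C)) : Prop :=
  ∀ p q : PigV C, H.Adj p q → ¬(pig C).Adj p q → p.val.2 ≠ q.val.2

/-- The displayed characters of a triangulation `H` of `pig C`: the characters
of `C` broken by no fill edge of `H`. -/
def displayedChars (C : Set (Set (Set X))) (H : SimpleGraph (PigV C)) :
    Set (Set (Set X)) :=
  {χ | χ ∈ C ∧ ∀ p q : PigV C, H.Adj p q → ¬(pig C).Adj p q →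
      ¬(p.val.2 = χ ∧ q.val.2 = χ)}

open Classical in
/-- The fill weight `F_w` on `pig C` induced by a character weight `w`:
`w χ` on monochromatic pairs with shared character `χ`, and `0` otherwise. -/
noncomputable def wWeight (C : Set (Set (Set X))) (w : Set (Set X) → ℝ≥0) :
    Sym2 (PigV C) → ℝ≥0 :=
  Sym2.lift ⟨fun p q => if p.val.2 = q.val.2 then w p.val.2 else 0, by
    intro p q
    dsimp only
    by_cases h : p.val.2 = q.val.2
    · rw [if_pos h, if_pos h.symm, h]
    · rw [if_neg h, if_neg (fun h' => h h'.symm)]⟩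

/-- The indicator fill weight `F_C` on `pig C`:
`1` on monochromatic pairs and `0` otherwise. -/
noncomputable def indWeight (C : Set (Set (Set X))) : Sym2 (PigV C) → ℝ≥0 :=
  wWeight C fun _ => 1

/-- `w(C')`: total weight of a set of characters. -/
noncomputable def wsum (w : Set (Set X) → ℝ≥0) (C' : Set (Set (Set X))) : ℝ≥0 :=
  ∑ᶠ χ ∈ C', w χ

/-- An `X`-tree: a finite tree `T` together with `φ : X → V(T)` such that every
node of degree at most two is in the image of `φ`. -/
structure XTree (X : Type) where
  V : Type
  finV : Finite V
  T : SimpleGraph V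
  isTree : T.IsTree
  φ : X → V
  lowDegreeLabeled : ∀ v : V, (T.neighborSet v).ncard ≤ 2 → v ∈ Set.range φ

/-- The vertex set of the minimal subtree of `T` connecting `φ(A)`:
the union of the (unique) paths between labels of elements of `A`. -/
def subtreeVerts {W : Type} (T : SimpleGraph W) (φ : X → W) (A : Set X) : Set W :=
  {v | ∃ a ∈ A, ∃ b ∈ A, ∃ p : T.Path (φ a) (φ b), v ∈ p.val.support}

/-- `(T, φ)` displays the character `χ`: for distinct cells `A`, `A'` of `χ` the
subtrees `T(A)` and `T(A')` share no node. -/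
def DisplaysIn {W : Type} (T : SimpleGraph W) (φ : X → W) (χ : Set (Set X)) : Prop :=
  ∀ A ∈ χ, ∀ A' ∈ χ, A ≠ A' → subtreeVerts T φ A ∩ subtreeVerts T φ A' = ∅

/-- The `X`-tree `t` displays the character `χ`. -/
def Displays (t : XTree X) (χ : Set (Set X)) : Prop := DisplaysIn t.T t.φ χ

/-- `t` is a perfect phylogeny for `C`: it displays every character of `C`. -/
def IsPerfectPhylogeny (C : Set (Set (Set X))) (t : XTree X) : Prop :=
  ∀ χ ∈ C, Displays t χ

/-- `C` is compatible: some `X`-tree displays every character in `C`. -/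
def Compatible (C : Set (Set (Set X))) : Prop := ∃ t : XTree X, IsPerfectPhylogeny C t

/-- Isomorphism of `X`-trees: a graph isomorphism carrying one labeling to the other. -/
def XTreeIso (t t' : XTree X) : Prop :=
  ∃ ψ : t.T ≃g t'.T, ∀ x : X, ψ (t.φ x) = t'.φ x

/-- `t` is ternary: every internal node (degree at least two) has degree three. -/
def Ternary (t : XTree X) : Prop :=
  ∀ v : t.V, 2 ≤ (t.T.neighborSet v).ncard → (t.T.neighborSet v).ncard = 3

/-- The graph obtained from `T` by contracting the edge `uv` (merging `v` into `u`). -/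
def contractGraph {W : Type} (T : SimpleGraph W) (u v : W) :
    SimpleGraph {x : W // x ≠ v} where
  Adj a b := a ≠ b ∧
    (T.Adj a.val b.val ∨ (a.val = u ∧ T.Adj v b.val) ∨ (b.val = u ∧ T.Adj a.val v))
  symm := by
    refine ⟨?_⟩
    rintro a b ⟨h0, h⟩
    refine ⟨h0.symm, ?_⟩
    rcases h with h | ⟨h1, h2⟩ | ⟨h1, h2⟩
    · exact Or.inl h.symm
    · exact Or.inr (Or.inr ⟨h1, h2.symm⟩)
    · exact Or.inr (Or.inl ⟨h1, h2.symm⟩)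
  loopless := ⟨fun a h => h.1 rfl⟩

open Classical in
/-- The labeling map after contracting the edge `uv` (merging `v` into `u`). -/
noncomputable def contractMap {W : Type} (φ : X → W) (u v : W) (huv : u ≠ v) :
    X → {x : W // x ≠ v} :=
  fun x => if h : φ x = v then ⟨u, huv⟩ else ⟨φ x, h⟩

/-- The edge `uv` of the `X`-tree `t` is distinguished by `χ`: contracting `uv`
results in an `X`-tree that does not display `χ`. -/
def EdgeDistinguishedBy (t : XTree X) (u v : t.V) (h : t.T.Adj u v)
    (χ : Set (Set X)) : Prop :=
  ¬DisplaysIn (contractGraph t.T u v) (contractMap t.φ u v h.ne) χ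

/-- `t` is distinguished by `C`: each edge of `t` is distinguished by some
character of `C`. -/
def DistinguishedBy (C : Set (Set (Set X))) (t : XTree X) : Prop :=
  ∀ u v : t.V, ∀ h : t.T.Adj u v, ∃ χ ∈ C, EdgeDistinguishedBy t u v h χ

/-- `Δ_min^F(G)`: the minimal separators of `G` that are minimal separators of
some `F`-minimum minimal triangulation of `G`. -/
def minFillSeps (G : SimpleGraph V) (F : Sym2 V → ℝ≥0) : Set (Set V) :=
  {S | ∃ H : SimpleGraph V, IsFMinMinimalTriangulation G H F ∧ S ∈ minSeps H}

end PMCPP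

/-! Restricting a triangulation of `R(S,C)` to `S' ∪ C` yields a triangulation of `R(S',C)`
whose fill edges are fill edges of the original. Conversely, since `N(C) = S'`, every edge of
`R(S,C)` lies inside `S` or inside `S' ∪ C`; gluing the clique on `S` to a triangulation of
`R(S',C)` restricted to `S' ∪ C` along the clique `S'` keeps the graph chordal (a chordless cycle
would have to cross `S'` at two non-adjacent vertices, which are joined) and adds no fill. -/

theorem Nat.exists_crossing {p : ℕ → Prop} {a b : ℕ} (hab : a ≤ b) (ha : p a) (hb : ¬p b) :
    ∃ k, a ≤ k ∧ k < b ∧ p k ∧ ¬p (k + 1) := by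
  induction b, hab using Nat.le_induction with
  | base => exact absurd ha hb
  | succ b hab ih =>
    by_cases hpb : p b
    · exact ⟨b, hab, b.lt_succ_self, hpb, hb⟩
    · obtain ⟨k, hak, hkb, hk⟩ := ih hpb
      exact ⟨k, hak, hkb.trans b.lt_succ_self, hk⟩

theorem ZMod.natCast_nonconsecutive {n i j : ℕ} (hi : 0 < i) (hij : i + 1 < j) (hj : j < n) :
    (i : ZMod n) ≠ j ∧ (j : ZMod n) ≠ i + 1 ∧ (i : ZMod n) ≠ j + 1 := by
  have hj1 : (j + 1) % n ≠ i := by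
    rcases (Nat.succ_le_of_lt hj).lt_or_eq with h | h
    · rw [Nat.mod_eq_of_lt h]; omega
    · rw [← Nat.succ_eq_add_one, h, Nat.mod_self]; omega
  simp only [ne_eq, ← Nat.cast_succ, ZMod.natCast_eq_natCast_iff', Nat.succ_eq_add_one,
    Nat.mod_eq_of_lt (show i < n by omega), Nat.mod_eq_of_lt (show i + 1 < n by omega),
    Nat.mod_eq_of_lt hj]
  omega

namespace PMCPP

section Chordal

variable {V : Type}

def completeOn (S : Set V) : SimpleGraph V where
  Adj u v := u ≠ v ∧ u ∈ S ∧ v ∈ S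
  symm := ⟨fun _ _ ⟨h, hu, hv⟩ => ⟨h.symm, hv, hu⟩⟩
  loopless := ⟨fun _ h => h.1 rfl⟩

theorem isClique_completeOn (S : Set V) : (completeOn S).IsClique S :=
  fun _ hu _ hv huv => ⟨huv, hu, hv⟩

theorem isChordal_of_adj_trans {H : SimpleGraph V}
    (htrans : ∀ ⦃u v w⦄, H.Adj u v → H.Adj v w → u ≠ w → H.Adj u w) : IsChordal H := by
  intro n hn f hf hadj
  obtain ⟨h13, h31, h13'⟩ := ZMod.natCast_nonconsecutive (n := n) (i := 1) (j := 3)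
    (by norm_num) (by norm_num) (by omega)
  have h23 : H.Adj (f (1 + 1)) (f 3) := by convert hadj 2 using 2 <;> norm_num
  exact ⟨1, 3, by exact_mod_cast h31, by exact_mod_cast h13',
    htrans (hadj 1) h23 (hf.ne (by exact_mod_cast h13))⟩

theorem isChordal_top : IsChordal (⊤ : SimpleGraph V) :=
  isChordal_of_adj_trans fun _ _ _ _ _ huw => huw

theorem isChordal_completeOn (S : Set V) : IsChordal (completeOn S) :=
  isChordal_of_adj_trans fun _ _ _ huv hvw huw => ⟨huw, huv.2.1, hvw.2.2⟩

theorem IsChordal.inf_completeOn {H : SimpleGraph V} (hH : IsChordal H) (U : Set V) :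
    IsChordal (H ⊓ completeOn U) := by
  intro n hn f hf hadj
  obtain ⟨i, j, hij, hji, hchord⟩ := hH n hn f hf fun i => (hadj i).1
  exact ⟨i, j, hij, hji, hchord, hchord.ne, (hadj i).2.2.1, (hadj j).2.2.1⟩

theorem exists_nonconsecutive_mem_inter {n : ℕ} [NeZero n] {P Q : Set V} (f : ZMod n → V)
    (hstep : ∀ i, (f i ∈ P ∧ f (i + 1) ∈ P) ∨ (f i ∈ Q ∧ f (i + 1) ∈ Q))
    {p q : ZMod n} (hp : f p ∉ Q) (hq : f q ∉ P) :
    ∃ i j : ZMod n, i ≠ j ∧ j ≠ i + 1 ∧ i ≠ j + 1 ∧ f i ∈ P ∩ Q ∧ f j ∈ P ∩ Q := by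
  set g : ℕ → V := fun k => f (p + k)
  have gstep (k : ℕ) : (g k ∈ P ∧ g (k + 1) ∈ P) ∨ (g k ∈ Q ∧ g (k + 1) ∈ Q) := by
    simpa only [g, Nat.cast_succ, add_assoc] using hstep (p + k)
  have hg0 : g 0 = f p := by simp [g]
  have hgm : g (q - p).val = f q := by simp [g]
  have hmn : (q - p).val < n := ZMod.val_lt _
  generalize (q - p).val = m at hgm hmn
  have hgn : g n = f p := by simp [g]
  have hg0P : g 0 ∈ P := ((gstep 0).resolve_right fun h => hp (hg0 ▸ h.1)).1
  have hgmQ : g m ∈ Q := ((gstep m).resolve_left fun h => hq (hgm ▸ h.1)).1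
  obtain ⟨i, -, him, hiP, hi1⟩ := Nat.exists_crossing (p := (g · ∈ P)) m.zero_le hg0P
    (by rwa [hgm])
  obtain ⟨j, hmj, hjn, hjQ, hj1⟩ := Nat.exists_crossing (p := (g · ∈ Q)) hmn.le
    hgmQ (by rwa [hgn])
  have hiQ : g i ∈ Q := ((gstep i).resolve_left fun h => hi1 h.2).1
  have hjP : g j ∈ P := ((gstep j).resolve_right fun h => hj1 h.2).1
  have hi0 : 0 < i := Nat.pos_of_ne_zero fun h => hp (hg0 ▸ h ▸ hiQ)
  have hmj' : m < j := hmj.lt_of_ne fun h => hq (by rwa [← hgm, h])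
  obtain ⟨hij, hji, hij'⟩ := ZMod.natCast_nonconsecutive (n := n) hi0 (by omega) hjn
  refine ⟨p + i, p + j, ?_, ?_, ?_, ⟨hiP, hiQ⟩, ⟨hjP, hjQ⟩⟩ <;>
    simpa only [ne_eq, add_assoc, add_right_inj]

theorem IsChordal.sup {A B : SimpleGraph V} {P Q : Set V} (hA : IsChordal A) (hB : IsChordal B)
    (hAP : ∀ ⦃u v⦄, A.Adj u v → u ∈ P ∧ v ∈ P) (hBQ : ∀ ⦃u v⦄, B.Adj u v → u ∈ Q ∧ v ∈ Q)
    (hAK : A.IsClique (P ∩ Q)) (hBK : B.IsClique (P ∩ Q)) : IsChordal (A ⊔ B) := by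
  intro n hn f hf hadj
  have : NeZero n := ⟨by omega⟩
  by_cases hP : ∀ i, f i ∈ P
  · have hadjA (i : ZMod n) : A.Adj (f i) (f (i + 1)) :=
      (hadj i).elim id fun h => hAK ⟨hP i, (hBQ h).1⟩ ⟨hP _, (hBQ h).2⟩ h.ne
    obtain ⟨i, j, hij, hji, hchord⟩ := hA n hn f hf hadjA
    exact ⟨i, j, hij, hji, Or.inl hchord⟩
  by_cases hQ : ∀ i, f i ∈ Q
  · have hadjB (i : ZMod n) : B.Adj (f i) (f (i + 1)) :=
      (hadj i).elim (fun h => hBK ⟨(hAP h).1, hQ i⟩ ⟨(hAP h).2, hQ _⟩ h.ne) id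
    obtain ⟨i, j, hij, hji, hchord⟩ := hB n hn f hf hadjB
    exact ⟨i, j, hij, hji, Or.inr hchord⟩
  push Not at hP hQ
  obtain ⟨q, hq⟩ := hP
  obtain ⟨p, hp⟩ := hQ
  obtain ⟨i, j, hne, hij, hji, hi, hj⟩ :=
    exists_nonconsecutive_mem_inter f (fun i => (hadj i).imp (hAP ·) (hBQ ·)) hp hq
  exact ⟨i, j, hij, hji, Or.inl (hAK hi hj (hf.ne hne))⟩

theorem isChordal_completeOn_sup_inf {H : SimpleGraph V} {P Q : Set V} (hH : IsChordal H)
    (hK : H.IsClique (P ∩ Q)) : IsChordal (completeOn P ⊔ (H ⊓ completeOn Q)) :=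
  (isChordal_completeOn P).sup (hH.inf_completeOn Q) (fun _ _ h => h.2) (fun _ _ h => h.2.2)
    ((isClique_completeOn P).subset Set.inter_subset_left)
    fun _ hu _ hv huv => ⟨hK hu hv huv, huv, hu.2, hv.2⟩

end Chordal

section Fill

variable {V : Type}

theorem fillEdges_sup_of_le {G H K : SimpleGraph V} (hK : K ≤ G) :
    fillEdges G (K ⊔ H) = fillEdges G H := by
  have := SimpleGraph.edgeSet_mono hK
  simp only [fillEdges, SimpleGraph.edgeSet_sup, Set.union_sdiff_distrib,
    Set.sdiff_eq_empty.2 this, Set.empty_union]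

theorem fillEdges_anti_left {G G' H : SimpleGraph V} (hG : G' ≤ G) :
    fillEdges G H ⊆ fillEdges G' H :=
  Set.sdiff_subset_sdiff_right (SimpleGraph.edgeSet_mono hG)

theorem fillEdges_mono_right {G H H' : SimpleGraph V} (hH : H ≤ H') :
    fillEdges G H ⊆ fillEdges G H' :=
  Set.sdiff_subset_sdiff_left (SimpleGraph.edgeSet_mono hH)

theorem fillEdges_inf_subset (G H K : SimpleGraph V) :
    fillEdges (G ⊓ K) (H ⊓ K) ⊆ fillEdges G H := by
  simp only [fillEdges, SimpleGraph.edgeSet_inf]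
  exact fun e ⟨⟨he, heK⟩, hG⟩ => ⟨he, fun heG => hG ⟨heG, heK⟩⟩

theorem mfi_le_mfi_of_forall_exists {G₁ G₂ : SimpleGraph V} (F : Sym2 V → ℝ≥0)
    (h : ∀ H₂, IsTriangulation G₂ H₂ →
      ∃ H₁, IsTriangulation G₁ H₁ ∧ fillSum G₁ H₁ F ≤ fillSum G₂ H₂ F) :
    mfi G₁ F ≤ mfi G₂ F := by
  refine le_csInf ⟨fillSum G₂ ⊤ F, ⊤, ⟨isChordal_top, le_top⟩, rfl⟩ ?_
  rintro _ ⟨H₂, hH₂, rfl⟩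
  obtain ⟨H₁, hH₁, hle⟩ := h H₂ hH₂
  exact le_trans (csInf_le (OrderBot.bddBelow _) ⟨H₁, hH₁, rfl⟩) hle

variable [Finite V]

theorem fillSum_le_fillSum {G G' H H' : SimpleGraph V} (F : Sym2 V → ℝ≥0)
    (h : fillEdges G H ⊆ fillEdges G' H') : fillSum G H F ≤ fillSum G' H' F := by
  have hs := (fillEdges G H).toFinite
  have ht := (fillEdges G' H').toFinite
  rw [fillSum, fillSum, ← hs.coe_toFinset, finsum_mem_coe_finset, ← ht.coe_toFinset,
    finsum_mem_coe_finset]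
  exact Finset.sum_le_sum_of_subset (Set.Finite.toFinset_subset_toFinset.2 h)

end Fill

section Realization

variable {V : Type} (G : SimpleGraph V) {S S' C : Set V}

theorem realization_mono (h : S' ⊆ S) : realization G S' C ≤ realization G S C := by
  rintro u v ⟨hne, hu, hv, hadj⟩
  exact ⟨hne, Set.union_subset_union_left C h hu, Set.union_subset_union_left C h hv,
    hadj.imp id fun huv => ⟨h huv.1, h huv.2⟩⟩

theorem completeOn_le_realization : completeOn S ≤ realization G S C := by
  rintro u v ⟨hne, hu, hv⟩
  exact ⟨hne, Or.inl hu, Or.inl hv, Or.inr ⟨hu, hv⟩⟩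

theorem realization_le_completeOn : realization G S C ≤ completeOn (S ∪ C) := by
  rintro u v ⟨hne, hu, hv, -⟩
  exact ⟨hne, hu, hv⟩

theorem realization_inf_completeOn (hCS : Disjoint C S) (h : S' ⊆ S) :
    realization G S C ⊓ completeOn (S' ∪ C) = realization G S' C := by
  have hS' : ∀ ⦃x⦄, x ∈ S → x ∈ S' ∪ C → x ∈ S' := fun x hxS hx =>
    hx.resolve_right fun hxC => hCS.notMem_of_mem_left hxC hxS
  refine le_antisymm ?_ (le_inf (realization_mono G h) (realization_le_completeOn G))
  rintro u v ⟨⟨hne, -, -, hadj⟩, -, hu, hv⟩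
  exact ⟨hne, hu, hv, hadj.imp id fun huv => ⟨hS' huv.1 hu, hS' huv.2 hv⟩⟩

theorem mem_neighborsOf_union_of_adj {x y : V} (hxy : G.Adj x y) (hx : x ∈ C) :
    y ∈ neighborsOf G C ∪ C := by
  by_cases hy : y ∈ C
  · exact Or.inr hy
  · exact Or.inl ⟨hy, x, hx, hxy⟩

theorem realization_le_completeOn_sup :
    realization G S C ≤ completeOn S ⊔ realization G (neighborsOf G C) C := by
  rintro u v ⟨hne, hu, hv, hadj⟩
  by_cases huv : u ∈ S ∧ v ∈ S
  · exact Or.inl ⟨hne, huv⟩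
  have hG : G.Adj u v := hadj.resolve_right huv
  rcases not_and_or.1 huv with huS | hvS
  · have huC := hu.resolve_left huS
    exact Or.inr ⟨hne, Or.inr huC, mem_neighborsOf_union_of_adj G hG huC, Or.inl hG⟩
  · have hvC := hv.resolve_left hvS
    exact Or.inr ⟨hne, mem_neighborsOf_union_of_adj G hG.symm hvC, Or.inr hvC, Or.inl hG⟩

end Realization

theorem nonfull_block_mfi_eq_general
    {V : Type} [Fintype V] (G : SimpleGraph V) (S C S' : Set V)
    (hC : IsCompOf G S C)
    (hN : neighborsOf G C = S') (hss : S' ⊂ S) (F : Sym2 V → ℝ≥0) :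
    mfi (realization G S C) F = mfi (realization G S' C) F := by
  have hCS : Disjoint C S := hC.2.1
  have hS'S : S' ⊆ S := hss.subset
  have hR := realization_inf_completeOn G hCS hS'S
  apply le_antisymm
  · refine mfi_le_mfi_of_forall_exists F fun H hH =>
      ⟨completeOn S ⊔ (H ⊓ completeOn (S' ∪ C)), ⟨?_, ?_⟩, ?_⟩
    · have hSQ : S ∩ (S' ∪ C) ⊆ S' := by
        rw [Set.inter_union_distrib_left, hCS.symm.inter_eq, Set.union_empty]
        exact Set.inter_subset_right
      exact isChordal_completeOn_sup_inf hH.1 <|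
        ((isClique_completeOn S').mono ((completeOn_le_realization G).trans hH.2)).subset hSQ
    · exact (hN ▸ realization_le_completeOn_sup G).trans
        (sup_le_sup_left (le_inf hH.2 (realization_le_completeOn G)) _)
    · refine fillSum_le_fillSum F ?_
      rw [fillEdges_sup_of_le (completeOn_le_realization G)]
      exact (fillEdges_anti_left (realization_mono G hS'S)).trans
        (fillEdges_mono_right inf_le_left)
  · refine mfi_le_mfi_of_forall_exists F fun H hH =>
      ⟨H ⊓ completeOn (S' ∪ C), ⟨hH.1.inf_completeOn _, hR ▸ inf_le_inf_right _ hH.2⟩, ?_⟩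
    exact fillSum_le_fillSum F (hR ▸ fillEdges_inf_subset _ _ _)

/-- If `S ∈ Δ(G)` and `C` is a component of `G − S` with
`N(C) = S' ⊊ S`, then `mfi_F(R(S,C)) = mfi_F(R(S',C))` for any fill weight `F`. -/
theorem nonfull_block_mfi_eq
    {V : Type} [Fintype V] (G : SimpleGraph V) (S C S' : Set V)
    (hS : S ∈ minSeps G) (hC : IsCompOf G S C)
    (hN : neighborsOf G C = S') (hss : S' ⊂ S) (F : Sym2 V → ℝ≥0) :
    mfi (realization G S C) F = mfi (realization G S' C) F :=
  nonfull_block_mfi_eq_general G S C S' hC hN hss F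

end PMCPP
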